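/- Correctness of quantum teleportation: for any unit vector ψ = α|0⟩ + β|1⟩ and each of the four measurement outcomes (r,s) ∈ {0,1}², applying the unitary Zʳ·Xˢ to the corresponding (unnormalized) post-measurement state of Bob's qubit recovers α|0⟩ + β|1⟩ up to the factor 1/2; concretely, writing the three-qubit state obtained by applying CNOT₁₂ then H₁ to ψ⊗Φ, with Φ = (|00⟩+|11⟩)/√2, as Σ_{r,s} |rs⟩⊗ψ_{rs}, the component ψ_{rs} attached to |rs⟩ equals (1/2)·XˢZʳ(α|0⟩+β|1⟩), so that ZʳXˢ applied to it yields (1/2)(α|0⟩+β|1⟩). -/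

import Mathlib

open Matrix Complex

set_option maxHeartbeats 2000000 in
theorem teleportation_correct (α β : ℂ) (hunit : ‖α‖ ^ 2 + ‖β‖ ^ 2 = 1) :
    let ψ : Fin 2 → ℂ := ![α, β]
    let H : Matrix (Fin 2) (Fin 2) ℂ := (1 / Real.sqrt 2 : ℂ) • !![1, 1; 1, -1]
    let X : Matrix (Fin 2) (Fin 2) ℂ := !![0, 1; 1, 0]
    let Z : Matrix (Fin 2) (Fin 2) ℂ := !![1, 0; 0, -1]
    -- EPR pair Φ = (|00⟩+|11⟩)/√2 on qubits 2,3
    let Φ : Fin 2 × Fin 2 → ℂ := fun p =>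
      (1 / Real.sqrt 2 : ℂ) * (if p = (0, 0) then 1 else 0) +
      (1 / Real.sqrt 2 : ℂ) * (if p = (1, 1) then 1 else 0)
    -- initial three-qubit state ψ ⊗ Φ
    let init : Fin 2 × Fin 2 × Fin 2 → ℂ := fun t => ψ t.1 * Φ t.2
    -- CNOT on qubits 1,2 (control the first)
    let CNOT12 : Matrix (Fin 2 × Fin 2 × Fin 2) (Fin 2 × Fin 2 × Fin 2) ℂ :=
      Matrix.of fun t t' =>
        if t.1 = t'.1 ∧ t.2.1 = t'.1 + t'.2.1 ∧ t.2.2 = t'.2.2 then 1 else 0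
    -- H on qubit 1
    let H1 : Matrix (Fin 2 × Fin 2 × Fin 2) (Fin 2 × Fin 2 × Fin 2) ℂ :=
      Matrix.of fun t t' => H t.1 t'.1 * (if t.2 = t'.2 then 1 else 0)
    let final : Fin 2 × Fin 2 × Fin 2 → ℂ := H1.mulVec (CNOT12.mulVec init)
    -- for each measurement outcome (r, s), Bob's unnormalized post-measurement qubit
    ∀ r s : Fin 2,
      let bob : Fin 2 → ℂ := fun c => final (r, s, c)
      (Z ^ (r : ℕ) * X ^ (s : ℕ)).mulVec bob = (1 / 2 : ℂ) • ψ := by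
  intro ψ H X Z Φ init CNOT12 H1 final r s bob
  have h2 : ((Real.sqrt 2 : ℝ) : ℂ) * ((Real.sqrt 2 : ℝ) : ℂ) = 2 := by
    rw [← Complex.ofReal_mul, Real.mul_self_sqrt (by norm_num : (0:ℝ) ≤ 2)]; norm_num
  have hinv : ((Real.sqrt 2 : ℝ) : ℂ)⁻¹ * ((Real.sqrt 2 : ℝ) : ℂ)⁻¹ = 1 / 2 := by
    rw [← mul_inv, h2]; norm_num
  funext c
  fin_cases r <;> fin_cases s <;> fin_cases c <;>
    simp only [bob, final, H1, CNOT12, init, Φ, ψ, H, X, Z, Matrix.mulVec,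
      dotProduct, Fintype.sum_prod_type, Fin.sum_univ_two, Matrix.of_apply,
      Pi.smul_apply, Matrix.smul_apply, pow_zero, pow_one, Matrix.one_apply,
      Matrix.mul_apply, Matrix.cons_val_zero, Matrix.cons_val_one, Matrix.head_cons,
      Matrix.head_fin_const, smul_eq_mul] <;>
    norm_num [Fin.ext_iff, Prod.ext_iff] <;>
    ring_nf <;>
    simp [pow_two, hinv, mul_comm, mul_assoc, mul_left_comm]
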